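/- Let C ⊆ F_2^n be a binary linear code with minimum distance at least 2t+1, and let u > t. Then the number of vectors y in F_2^n with wt(y) = u that lie at Hamming distance greater than t from every codeword of C equals C(n,u) − Σ_{r=u−t}^{u+t} A_r · Σ_{(a,b)} C(r,a)·C(n−r,b), where for each r the inner sum is over all pairs of natural numbers (a,b) with a + b ≤ t and u + a = r + b. -/

import Mathlib

/-!
Codewords are pairwise at distance at least `2t + 1`, so the radius-`t` balls around them are
disjoint and the weight-`u` words that are *not* failures are counted codeword by codeword.
Identifying a binary word with its support, a word of weight `u` within distance `t` of a
codeword of weight `r` arises from it by clearing `a` of its `r` ones and setting `b` of its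
`n - r` zeros, with `a + b ≤ t` and `u + a = r + b`: `C(r,a) C(n-r,b)` choices. Grouping the
codewords by weight gives the formula; weights outside `[u - t, u + t]` contribute nothing.
-/

open Finset

section FinsetCounting

variable {ι : Type*} [DecidableEq ι]

theorem card_add_card_sdiff_eq_card_add_card_sdiff (S T : Finset ι) :
    #S + #(T \ S) = #T + #(S \ T) := by
  rw [add_comm, card_sdiff_add_card, add_comm, card_sdiff_add_card, union_comm]

variable [Fintype ι]

theorem card_filter_card_sdiff_eq_and_card_sdiff_eq (T : Finset ι) (a b : ℕ) :
    #{S : Finset ι | #(T \ S) = a ∧ #(S \ T) = b} =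
      (#T).choose a * (Fintype.card ι - #T).choose b := by
  rw [← card_compl, ← card_powersetCard, ← card_powersetCard, ← card_product]
  have hA {A B : Finset ι} (hA : A ⊆ T) (hB : B ⊆ Tᶜ) : T \ (T \ A ∪ B) = A := by
    ext i; have := @hA i; have := @hB i; simp only [mem_sdiff, mem_union, mem_compl] at *; tauto
  have hB {A B : Finset ι} (hB : B ⊆ Tᶜ) : (T \ A ∪ B) \ T = B := by
    ext i; have := @hB i; simp only [mem_sdiff, mem_union, mem_compl] at *; tauto
  refine card_nbij' (fun S => (T \ S, S \ T)) (fun p => T \ p.1 ∪ p.2) ?_ ?_ ?_ ?_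
  · intro S hS
    simp only [coe_filter, mem_univ, true_and, Set.mem_ofPred_eq] at hS
    simp only [coe_product, Set.mem_prod, mem_coe, mem_powersetCard]
    exact ⟨⟨sdiff_subset, hS.1⟩, fun i hi => by simpa using (mem_sdiff.1 hi).2, hS.2⟩
  · rintro ⟨A, B⟩ hAB
    simp only [coe_product, Set.mem_prod, mem_coe, mem_powersetCard] at hAB
    obtain ⟨⟨hAT, rfl⟩, hBT, rfl⟩ := hAB
    simp only [coe_filter, mem_univ, true_and, Set.mem_ofPred_eq, hA hAT hBT, hB hBT]
  · intro S _
    ext i; simp only [mem_sdiff, mem_union]; tauto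
  · rintro ⟨A, B⟩ hAB
    simp only [coe_product, Set.mem_prod, mem_coe, mem_powersetCard] at hAB
    simp only [hA hAB.1.1 hAB.2.1, hB hAB.2.1]

/-- `(a, b)` ranges over the ways a word of weight `r` can lose `a` and gain `b` ones,
changing at most `t` positions, to reach weight `u`. -/
def errorPatterns (t u r : ℕ) : Finset (ℕ × ℕ) :=
  (range (t + 1) ×ˢ range (t + 1)).filter (fun ab => ab.1 + ab.2 ≤ t ∧ u + ab.1 = r + ab.2)

/-- The number of words of weight `u` in `𝔽₂ⁿ` within distance `t` of a fixed word of
weight `r`. -/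
def weightBallCount (n t u r : ℕ) : ℕ :=
  ∑ ab ∈ errorPatterns t u r, r.choose ab.1 * (n - r).choose ab.2

theorem card_filter_card_eq_and_card_sdiff_add_card_sdiff_le (T : Finset ι) (t u : ℕ) :
    #{S : Finset ι | #S = u ∧ #(S \ T) + #(T \ S) ≤ t} =
      weightBallCount (Fintype.card ι) t u #T := by
  rw [card_eq_sum_card_fiberwise (f := fun S => (#(T \ S), #(S \ T)))
    (t := errorPatterns t u #T)]
  · refine sum_congr rfl fun ⟨a, b⟩ hab => ?_
    rw [← card_filter_card_sdiff_eq_and_card_sdiff_eq, filter_filter]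
    congr 1
    ext S
    simp only [errorPatterns, mem_filter, mem_product, mem_range, mem_univ, true_and,
      Prod.mk.injEq] at hab ⊢
    have := card_add_card_sdiff_eq_card_add_card_sdiff S T
    constructor
    · exact And.right
    · rintro ⟨rfl, rfl⟩; exact ⟨⟨by omega, by omega⟩, rfl, rfl⟩
  · intro S hS
    simp only [coe_filter, mem_univ, true_and, Set.mem_ofPred_eq] at hS
    simp only [errorPatterns, coe_filter, mem_product, mem_range, Set.mem_ofPred_eq]
    have := card_add_card_sdiff_eq_card_add_card_sdiff S T
    omega

theorem weightBallCount_eq_zero_of_notMem_Icc {n t u r : ℕ} (hr : r ∉ Icc (u - t) (u + t)) :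
    weightBallCount n t u r = 0 := by
  refine sum_eq_zero fun ab hab => ?_
  simp only [errorPatterns, mem_filter, mem_product, mem_range] at hab
  simp only [mem_Icc] at hr
  omega

end FinsetCounting

section BinaryWords

variable {ι : Type*} [Fintype ι] [DecidableEq ι]

def binarySupportEquiv : (ι → ZMod 2) ≃ Finset ι where
  toFun y := {i | y i ≠ 0}
  invFun S i := if i ∈ S then 1 else 0
  left_inv y := by
    funext i
    rcases (by generalize y i = a; revert a; decide : y i = 0 ∨ y i = 1) with h | h <;> simp [h]
  right_inv S := by
    ext i
    by_cases h : i ∈ S <;> simp [h]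

theorem hammingNorm_eq_card_binarySupportEquiv (y : ι → ZMod 2) :
    hammingNorm y = #(binarySupportEquiv y) := rfl

theorem hammingDist_eq_card_sdiff_add_card_sdiff (y c : ι → ZMod 2) :
    hammingDist y c =
      #(binarySupportEquiv y \ binarySupportEquiv c) +
        #(binarySupportEquiv c \ binarySupportEquiv y) := by
  rw [← card_union_of_disjoint disjoint_sdiff_sdiff, hammingDist]
  congr 1
  ext i
  simp only [binarySupportEquiv, Equiv.coe_fn_mk, mem_filter, mem_univ, true_and, mem_union,
    mem_sdiff]
  generalize y i = a
  generalize c i = b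
  revert a b
  decide

theorem card_hammingNorm_eq (u : ℕ) :
    #{y : ι → ZMod 2 | hammingNorm y = u} = (Fintype.card ι).choose u := by
  rw [card_equiv binarySupportEquiv (t := powersetCard u univ), card_powersetCard, card_univ]
  intro y
  simp only [mem_filter, mem_univ, true_and, mem_powersetCard, subset_univ]
  rfl

theorem card_hammingNorm_eq_and_hammingDist_le (c : ι → ZMod 2) (t u : ℕ) :
    #{y : ι → ZMod 2 | hammingNorm y = u ∧ hammingDist y c ≤ t} =
      weightBallCount (Fintype.card ι) t u (hammingNorm c) := by
  rw [hammingNorm_eq_card_binarySupportEquiv,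
    ← card_filter_card_eq_and_card_sdiff_add_card_sdiff_le, card_equiv binarySupportEquiv]
  intro y
  simp [hammingNorm_eq_card_binarySupportEquiv, hammingDist_eq_card_sdiff_add_card_sdiff]

end BinaryWords

section Codes

variable {ι β : Type*} [Fintype ι] [DecidableEq β]

theorem card_filter_exists_hammingDist_le {K s : Finset (ι → β)} {t : ℕ}
    (hK : (K : Set (ι → β)).Pairwise fun c₁ c₂ => 2 * t + 1 ≤ hammingDist c₁ c₂) :
    #{y ∈ s | ∃ c ∈ K, hammingDist y c ≤ t} = ∑ c ∈ K, #{y ∈ s | hammingDist y c ≤ t} := by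
  rw [← card_biUnion]
  · congr 1
    ext y
    simp only [mem_filter, mem_biUnion]
    tauto
  · intro c₁ hc₁ c₂ hc₂ hne
    refine disjoint_left.2 fun y hy₁ hy₂ => ?_
    have := hammingDist_triangle_left c₁ c₂ y
    have := hK hc₁ hc₂ hne
    simp only [mem_filter] at hy₁ hy₂
    omega

theorem pairwise_le_hammingDist_of_le_hammingNorm [AddGroup β] {S : Type*}
    [SetLike S (ι → β)] [AddSubgroupClass S (ι → β)] {C : S} {d : ℕ}
    (h : ∀ c ∈ C, c ≠ 0 → d ≤ hammingNorm c) :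
    (C : Set (ι → β)).Pairwise fun c₁ c₂ => d ≤ hammingDist c₁ c₂ := by
  intro c₁ h₁ c₂ h₂ hne
  rw [hammingDist_eq_hammingNorm]
  exact h _ (add_mem (neg_mem h₁) h₂) (neg_add_eq_zero.not.2 hne)

end Codes

theorem sum_comp_eq_sum_card_filter_smul {α κ M : Type*} [DecidableEq κ] [AddCommMonoid M]
    (s : Finset α) (I : Finset κ) (w : α → κ) {g : κ → M} (hg : ∀ r ∉ I, g r = 0) :
    ∑ c ∈ s, g (w c) = ∑ r ∈ I, #{c ∈ s | w c = r} • g r := by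
  rw [← sum_filter_of_ne (p := fun c => w c ∈ I) fun c _ h => by_contra fun hc => h (hg _ hc),
    ← sum_fiberwise_eq_sum_filter]
  refine sum_congr rfl fun r _ => ?_
  rw [sum_congr rfl fun c hc => by rw [(mem_filter.1 hc).2], sum_const]

theorem bdd_failure_count_general (n t u : ℕ)
    (C : Submodule (ZMod 2) (Fin n → ZMod 2)) [DecidablePred (· ∈ C)]
    (hdmin : ∀ c ∈ C, c ≠ 0 → 2 * t + 1 ≤ hammingNorm c) :
    (Finset.univ.filter (fun y : Fin n → ZMod 2 =>
        hammingNorm y = u ∧ ∀ c ∈ C, t < hammingDist y c)).card =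
      n.choose u -
        ∑ r ∈ Finset.Icc (u - t) (u + t),
          (Finset.univ.filter
              (fun c : Fin n → ZMod 2 => c ∈ C ∧ hammingNorm c = r)).card *
            ∑ ab ∈ (Finset.range (t + 1) ×ˢ Finset.range (t + 1)).filter
                (fun ab => ab.1 + ab.2 ≤ t ∧ u + ab.1 = r + ab.2),
              r.choose ab.1 * (n - r).choose ab.2 := by
  set K : Finset (Fin n → ZMod 2) := {c | c ∈ C}
  set W : Finset (Fin n → ZMod 2) := {y | hammingNorm y = u}
  have hsep : (K : Set (Fin n → ZMod 2)).Pairwise fun c₁ c₂ => 2 * t + 1 ≤ hammingDist c₁ c₂ :=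
    (pairwise_le_hammingDist_of_le_hammingNorm hdmin).mono fun c hc => (mem_filter.1 hc).2
  have hcorrectable : #{y ∈ W | ∃ c ∈ K, hammingDist y c ≤ t} =
      ∑ c ∈ K, weightBallCount n t u (hammingNorm c) := by
    rw [card_filter_exists_hammingDist_le hsep]
    refine sum_congr rfl fun c _ => ?_
    rw [filter_filter, card_hammingNorm_eq_and_hammingDist_le, Fintype.card_fin]
  have hsplit : #{y ∈ W | ¬∃ c ∈ K, hammingDist y c ≤ t} +
      ∑ c ∈ K, weightBallCount n t u (hammingNorm c) = n.choose u := by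
    rw [← hcorrectable, add_comm, card_filter_add_card_filter_not, card_hammingNorm_eq,
      Fintype.card_fin]
  have hregroup : ∑ c ∈ K, weightBallCount n t u (hammingNorm c) =
      ∑ r ∈ Icc (u - t) (u + t), #{c | c ∈ C ∧ hammingNorm c = r} * weightBallCount n t u r := by
    rw [sum_comp_eq_sum_card_filter_smul K _ hammingNorm
      fun r hr => weightBallCount_eq_zero_of_notMem_Icc hr]
    simp only [K, filter_filter, smul_eq_mul]
  have hfailure_set :
      ({y | hammingNorm y = u ∧ ∀ c ∈ C, t < hammingDist y c} : Finset (Fin n → ZMod 2)) =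
      {y ∈ W | ¬∃ c ∈ K, hammingDist y c ≤ t} := by
    ext y
    simp [W, K]
  change _ = n.choose u - ∑ r ∈ Icc (u - t) (u + t), _ * weightBallCount n t u r
  rw [hfailure_set, ← hregroup]
  omega

/-- For a binary linear code `C ⊆ 𝔽₂ⁿ` with minimum distance at least
`2t+1`, and `u > t`, the number of vectors `y` with `wt(y) = u` at Hamming distance
greater than `t` from every codeword equals
`C(n,u) − ∑_{r=u−t}^{u+t} A_r · ∑_{(a,b) : a+b ≤ t, u+a = r+b} C(r,a)·C(n−r,b)`. -/
theorem bdd_failure_count (n t u : ℕ)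
    (C : Submodule (ZMod 2) (Fin n → ZMod 2)) [DecidablePred (· ∈ C)]
    (hdmin : ∀ c ∈ C, c ≠ 0 → 2 * t + 1 ≤ hammingNorm c)
    (hu : t < u) :
    (Finset.univ.filter (fun y : Fin n → ZMod 2 =>
        hammingNorm y = u ∧ ∀ c ∈ C, t < hammingDist y c)).card =
      n.choose u -
        ∑ r ∈ Finset.Icc (u - t) (u + t),
          (Finset.univ.filter
              (fun c : Fin n → ZMod 2 => c ∈ C ∧ hammingNorm c = r)).card *
            ∑ ab ∈ (Finset.range (t + 1) ×ˢ Finset.range (t + 1)).filter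
                (fun ab => ab.1 + ab.2 ≤ t ∧ u + ab.1 = r + ab.2),
              r.choose ab.1 * (n - r).choose ab.2 :=
  bdd_failure_count_general n t u C hdmin
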